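/- arXiv:2108.00258 — 3 statements merged into one kernel-verified Lean document; each statement's English description precedes it below -/
import Mathlib

section
/- Let K ⊂ 𝔻 be a set that is closed in 𝔻, and suppose there exists r₀ ∈ [0, 1) such that K ∩ 𝕊¹(r) ≠ ∅ for every r ∈ (r₀, 1), where 𝕊¹(r) is the circle of radius r centered at the origin. Then the conformal capacity cap(K ∩ closure(𝔻(r)), 𝔻) tends to infinity as r → 1, where 𝔻(r) is the open disk of radius r centered at the origin. -/
open MeasureTheory Metric Set Filter Topology

noncomputable section

/-- The open unit disk in the complex plane. -/
def unitDisk : Set ℂ := Metric.ball 0 1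

/-- The unit circle in the complex plane. -/
def unitCircle : Set ℂ := Metric.sphere 0 1

/-- `g` is a distributional (weak) partial derivative of `h` on `Ω` in the direction `v`:
integration by parts against smooth test functions compactly supported in `Ω`. -/
def HasWeakPartialDeriv (Ω : Set ℂ) (h g : ℂ → ℂ) (v : ℂ) : Prop :=
  ∀ φ : ℂ → ℝ, ContDiff ℝ (⊤ : ℕ∞) φ → HasCompactSupport φ → tsupport φ ⊆ Ω →
    ∫ z in Ω, (fderiv ℝ φ z v) • h z = - ∫ z in Ω, φ z • g z

/-- Membership in the Sobolev space `W^{1,2}(Ω, ℂ)`: the map and both weak partial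
derivatives are in `L²(Ω)`. -/
def MemW12 (Ω : Set ℂ) (h : ℂ → ℂ) : Prop :=
  MemLp h 2 (volume.restrict Ω) ∧
  ∃ gx gy : ℂ → ℂ, HasWeakPartialDeriv Ω h gx 1 ∧ HasWeakPartialDeriv Ω h gy Complex.I ∧
    MemLp gx 2 (volume.restrict Ω) ∧ MemLp gy 2 (volume.restrict Ω)

/-- Membership in `W^{1,2}_loc(Ω, ℂ)`. -/
def MemW12loc (Ω : Set ℂ) (h : ℂ → ℂ) : Prop :=
  ∀ z ∈ Ω, ∃ ε > 0, Metric.ball z ε ⊆ Ω ∧ MemW12 (Metric.ball z ε) h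

/-- Membership in `W^{1,2}_0(Ω, ℂ)`: the closure of smooth compactly supported maps in
the `W^{1,2}`-norm, expressed via an approximating sequence. -/
def MemW120 (Ω : Set ℂ) (h : ℂ → ℂ) : Prop :=
  ∃ gx gy : ℂ → ℂ,
    HasWeakPartialDeriv Ω h gx 1 ∧ HasWeakPartialDeriv Ω h gy Complex.I ∧
    MemLp h 2 (volume.restrict Ω) ∧ MemLp gx 2 (volume.restrict Ω) ∧
    MemLp gy 2 (volume.restrict Ω) ∧
    ∃ φ : ℕ → ℂ → ℂ,
      (∀ n, ContDiff ℝ (⊤ : ℕ∞) (φ n) ∧ HasCompactSupport (φ n) ∧ tsupport (φ n) ⊆ Ω) ∧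
      Tendsto (fun n => eLpNorm (fun z => h z - φ n z) 2 (volume.restrict Ω)) atTop (nhds 0) ∧
      Tendsto (fun n => eLpNorm (fun z => gx z - fderiv ℝ (φ n) z 1) 2 (volume.restrict Ω))
        atTop (nhds 0) ∧
      Tendsto (fun n => eLpNorm (fun z => gy z - fderiv ℝ (φ n) z Complex.I) 2
        (volume.restrict Ω)) atTop (nhds 0)

/-- The Wirtinger derivative `∂h/∂z` computed from the partial derivatives
`gx = ∂h/∂x` and `gy = ∂h/∂y`. -/
def wirtZ (gx gy : ℂ → ℂ) (z : ℂ) : ℂ := (gx z - Complex.I * gy z) / 2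

/-- The Wirtinger derivative `∂h/∂z̄` computed from the partial derivatives
`gx = ∂h/∂x` and `gy = ∂h/∂y`. -/
def wirtZBar (gx gy : ℂ → ℂ) (z : ℂ) : ℂ := (gx z + Complex.I * gy z) / 2

/-- The Jacobian determinant `J_h = |h_z|² - |h_z̄|²` computed from the partial
derivatives `gx = ∂h/∂x` and `gy = ∂h/∂y`. -/
def jacDet (gx gy : ℂ → ℂ) (z : ℂ) : ℝ :=
  ‖wirtZ gx gy z‖ ^ 2 - ‖wirtZBar gx gy z‖ ^ 2

/-- `J_h ≥ 0` almost everywhere on `Ω` (with respect to a weak gradient of `h`). -/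
def JacNonnegAE (Ω : Set ℂ) (h : ℂ → ℂ) : Prop :=
  ∃ gx gy : ℂ → ℂ, HasWeakPartialDeriv Ω h gx 1 ∧ HasWeakPartialDeriv Ω h gy Complex.I ∧
    ∀ᵐ z ∂(volume.restrict Ω), 0 ≤ jacDet gx gy z

/-- The Wirtinger derivative `∂ψ/∂z̄` of a (smooth) map `ψ`. -/
def dzbar (ψ : ℂ → ℂ) (z : ℂ) : ℂ :=
  (fderiv ℝ ψ z 1 + Complex.I * fderiv ℝ ψ z Complex.I) / 2

/-- `h` satisfies the Hopf-Laplace equation `∂_z̄ (h_z ⬝ conj h_z̄) = 0` on `Ω` in the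
sense of distributions. -/
def SatisfiesHopfLaplace (Ω : Set ℂ) (h : ℂ → ℂ) : Prop :=
  ∃ gx gy : ℂ → ℂ, HasWeakPartialDeriv Ω h gx 1 ∧ HasWeakPartialDeriv Ω h gy Complex.I ∧
    ∀ ψ : ℂ → ℂ, ContDiff ℝ (⊤ : ℕ∞) ψ → HasCompactSupport ψ → tsupport ψ ⊆ Ω →
      ∫ z in Ω, (wirtZ gx gy z * (starRingEnd ℂ) (wirtZBar gx gy z)) * dzbar ψ z = 0

/-- `f` restricts to a homeomorphism of `A` onto `B`. -/
def IsHomeoOn (f : ℂ → ℂ) (A B : Set ℂ) : Prop :=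
  ContinuousOn f A ∧ Set.BijOn f A B ∧
    ∃ g : ℂ → ℂ, ContinuousOn g B ∧ (∀ x ∈ A, g (f x) = x) ∧ ∀ y ∈ B, f (g y) = y

/-- A Jordan domain: a bounded, simply connected planar domain whose boundary is a
Jordan curve (a homeomorphic image of the circle). -/
def IsJordanDomain (X : Set ℂ) : Prop :=
  IsOpen X ∧ Bornology.IsBounded X ∧ IsConnected X ∧ SimplyConnectedSpace ↥X ∧
    ∃ φ : ℂ → ℂ, ContinuousOn φ unitCircle ∧ Set.InjOn φ unitCircle ∧
      φ '' unitCircle = frontier X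

/-- A domain is Lipschitz if its boundary is locally the graph of a Lipschitz function
(up to a rigid motion of the plane). -/
def IsLipschitzDomain (Y : Set ℂ) : Prop :=
  ∀ p ∈ frontier Y, ∃ (e : ℂ ≃ᵢ ℂ) (r : ℝ) (L : NNReal) (φ : ℝ → ℝ),
    0 < r ∧ LipschitzWith L φ ∧ e p = 0 ∧
    ∀ z ∈ Metric.ball (0 : ℂ) r, (e.symm z ∈ Y ↔ φ z.re < z.im)

/-- `h` satisfies the Lusin (N) condition on `Ω`: sets of measure zero are mapped to
sets of measure zero. -/
def LusinN (Ω : Set ℂ) (h : ℂ → ℂ) : Prop :=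
  ∀ E ⊆ Ω, volume E = 0 → volume (h '' E) = 0

/-- The pointwise Jacobian determinant of a (smooth) map `g : ℂ → ℂ` viewed as a map
of the plane. -/
def realJac (g : ℂ → ℂ) (z : ℂ) : ℝ :=
  (fderiv ℝ g z 1).re * (fderiv ℝ g z Complex.I).im -
    (fderiv ℝ g z 1).im * (fderiv ℝ g z Complex.I).re

/-- `d` is the Brouwer degree of `h` at the point `y` with respect to the bounded open
set `U` (`h` continuous on `closure U`, `y ∉ h(∂U)`), characterized analytically: for
every smooth map `g` uniformly close to `h` on `closure U` and every smooth probability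
density `ψ` concentrated near `y`, the integral `∫_U ψ(g) J_g` equals `d`. -/
def HasDegreeAt (h : ℂ → ℂ) (y : ℂ) (U : Set ℂ) (d : ℤ) : Prop :=
  ∃ ε > 0, (∀ z ∈ frontier U, ε ≤ dist y (h z)) ∧
    ∀ g : ℂ → ℂ, ContDiff ℝ (⊤ : ℕ∞) g → (∀ z ∈ closure U, dist (g z) (h z) < ε / 2) →
      ∀ ψ : ℂ → ℝ, ContDiff ℝ (⊤ : ℕ∞) ψ → HasCompactSupport ψ →
        tsupport ψ ⊆ Metric.ball y (ε / 2) → (∫ w, ψ w) = 1 →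
        (∫ z in U, ψ (g z) * realJac g z) = (d : ℝ)

open Classical in
/-- The Dirichlet energy `∫_Ω |Dh|²` of a Sobolev map, computed from a (choice of)
weak gradient; weak gradients are a.e. unique, so the value does not depend on the
choice. -/
def dirichletEnergy (Ω : Set ℂ) (h : ℂ → ℂ) : ℝ :=
  if hW : ∃ p : (ℂ → ℂ) × (ℂ → ℂ),
      HasWeakPartialDeriv Ω h p.1 1 ∧ HasWeakPartialDeriv Ω h p.2 Complex.I then
    ∫ z in Ω, (‖hW.choose.1 z‖ ^ 2 + ‖hW.choose.2 z‖ ^ 2)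
  else 0

/-- The conformal capacity of the condenser `(K, U)`. -/
def conformalCapacity (K U : Set ℂ) : ℝ :=
  sInf {E : ℝ | ∃ u : ℂ → ℝ, ContDiff ℝ (⊤ : ℕ∞) u ∧ HasCompactSupport u ∧
    tsupport u ⊆ U ∧ (∀ z ∈ K, 1 ≤ u z) ∧ E = ∫ z in U, ‖fderiv ℝ u z‖ ^ 2}

/-- The `K`-oscillation property of a map `H` on an open set `U`. -/
def KOscillationProperty (K : ℝ) (U : Set ℂ) (H : ℂ → ℂ) : Prop :=
  ∀ z ∈ U, ∀ᵐ r ∂(volume.restrict (Set.Ioo (0 : ℝ) (Metric.infDist z Uᶜ))),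
    EMetric.diam (H '' Metric.ball z r) ≤
      ENNReal.ofReal K * EMetric.diam (H '' Metric.sphere z r)

/-- The set of connected components of a set `A`. -/
def componentsIn (A : Set ℂ) : Set (Set ℂ) := {C | ∃ x ∈ A, C = connectedComponentIn A x}

/-- There exist an open ball `B` and a nonempty connected component `U` of `h⁻¹(B)`
(in the unit disk) on which the Jacobian of `h` vanishes almost everywhere. -/
def HasZeroJacComponent (h : ℂ → ℂ) : Prop :=
  ∃ (y : ℂ) (r : ℝ) (x : ℂ) (gx gy : ℂ → ℂ), 0 < r ∧
    x ∈ unitDisk ∩ h ⁻¹' Metric.ball y r ∧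
    HasWeakPartialDeriv unitDisk h gx 1 ∧ HasWeakPartialDeriv unitDisk h gy Complex.I ∧
    ∀ᵐ z ∂(volume.restrict (connectedComponentIn (unitDisk ∩ h ⁻¹' Metric.ball y r) x)),
      jacDet gx gy z = 0

/-- The real interval `(a, b)` with extended-real endpoints. -/
def erealIoo (a b : EReal) : Set ℝ := {t : ℝ | a < (t : EReal) ∧ (t : EReal) < b}

/-- The filter describing `t → c` (where `c` is an endpoint, possibly infinite) within
the interval `(a, b)`. -/
def endpointFilter (a b c : EReal) : Filter ℝ :=
  Filter.comap (fun t : ℝ => (t : EReal)) (nhdsWithin c (Set.Ioo a b))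

/-- `γ : (a,b) → Ω` is a vertical arc of the quadratic differential `g dz ⊗ dz`:
a smooth curve with `g(γ(t))·γ'(t)² < 0` everywhere. -/
def IsVerticalArcOn (g : ℂ → ℂ) (Ω : Set ℂ) (a b : EReal) (γ : ℝ → ℂ) : Prop :=
  (∀ t ∈ erealIoo a b, γ t ∈ Ω) ∧ ContDiffOn ℝ (⊤ : ℕ∞) γ (erealIoo a b) ∧
    ∀ t ∈ erealIoo a b, ∃ c : ℝ, c < 0 ∧ g (γ t) * (deriv γ t) ^ 2 = (c : ℂ)

/-- `γ : (a,b) → Ω` is a horizontal arc of the quadratic differential `g dz ⊗ dz`: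
a smooth curve with `g(γ(t))·γ'(t)² > 0` everywhere. -/
def IsHorizontalArcOn (g : ℂ → ℂ) (Ω : Set ℂ) (a b : EReal) (γ : ℝ → ℂ) : Prop :=
  (∀ t ∈ erealIoo a b, γ t ∈ Ω) ∧ ContDiffOn ℝ (⊤ : ℕ∞) γ (erealIoo a b) ∧
    ∀ t ∈ erealIoo a b, ∃ c : ℝ, 0 < c ∧ g (γ t) * (deriv γ t) ^ 2 = (c : ℂ)

/-- A vertical trajectory: a maximal vertical arc. -/
def IsVerticalTrajectory (g : ℂ → ℂ) (Ω : Set ℂ) (a b : EReal) (γ : ℝ → ℂ) : Prop :=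
  IsVerticalArcOn g Ω a b γ ∧
    ∀ (a' b' : EReal) (γ' : ℝ → ℂ), IsVerticalArcOn g Ω a' b' γ' →
      a' ≤ a → b ≤ b' → Set.EqOn γ γ' (erealIoo a b) → a' = a ∧ b' = b

/-- A horizontal trajectory: a maximal horizontal arc. -/
def IsHorizontalTrajectory (g : ℂ → ℂ) (Ω : Set ℂ) (a b : EReal) (γ : ℝ → ℂ) : Prop :=
  IsHorizontalArcOn g Ω a b γ ∧
    ∀ (a' b' : EReal) (γ' : ℝ → ℂ), IsHorizontalArcOn g Ω a' b' γ' →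
      a' ≤ a → b ≤ b' → Set.EqOn γ γ' (erealIoo a b) → a' = a ∧ b' = b

/-- The arc `γ` exits a critical point (a zero of the coefficient `g`) of the
quadratic differential at one of its endpoints. -/
def ExitsCriticalPoint (g : ℂ → ℂ) (Ω : Set ℂ) (a b : EReal) (γ : ℝ → ℂ) : Prop :=
  ∃ z ∈ Ω, g z = 0 ∧
    (Tendsto γ (endpointFilter a b a) (nhds z) ∨ Tendsto γ (endpointFilter a b b) (nhds z))

/-!
Let `u` be admissible and `E = ∫_𝔻 |∇u|²`. For `t` close to `1`, `K` gives a point `t e^{iθ₀}`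
with `u ≥ 1`; take the arc `|θ - θ₀| ≤ w` with `w = κ (1 - t)`. Along the arc, and along each
radius from the arc out to the unit circle (where `u = 0`), the fundamental theorem of calculus
and AM-GM give `1 ≤ 1/2 + (1 - t) ∫ₜ¹ |∇u|² ds + 2w ∫_arc |∇u|² dθ`. Integrated over the arc, the
radial terms contribute at most `2E (1 - t)` (polar coordinates, `t ≥ 1/2`), so if `κ ≥ 4E` then
`1 ≤ 8κ (1 - t) ∫_{-π}^{π} |∇u(t e^{iθ})|² dθ`. Integrating over `t ∈ (a, r)` yields
`log ((1 - a) / (1 - r)) ≤ 16 κ E`, which forces `E → ∞` as `r → 1`.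
-/

open Real

theorem abs_sub_le_quarter_add_mul_integral_sq {f f' g : ℝ → ℝ} {a b x y : ℝ}
    (hx : x ∈ Icc a b) (hy : y ∈ Icc a b) (hf : ∀ s ∈ Icc a b, HasDerivAt f (f' s) s)
    (hf' : IntervalIntegrable f' volume a b)
    (hg : IntervalIntegrable (fun s => g s ^ 2) volume a b)
    (hfg : ∀ s ∈ Icc a b, |f' s| ≤ g s) :
    |f y - f x| ≤ 1 / 4 + (b - a) * ∫ s in a..b, g s ^ 2 := by
  rcases (hx.1.trans hx.2).eq_or_lt with rfl | hab
  · obtain rfl : x = y := by linarith [hx.1, hx.2, hy.1, hy.2]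
    simp
  set c := b - a
  have hc : 0 < c := sub_pos.2 hab
  have hxy : uIcc x y ⊆ uIcc a b := uIcc_subset_uIcc (Icc_subset_uIcc hx) (Icc_subset_uIcc hy)
  have hab' : uIcc a b = Icc a b := uIcc_of_le hab.le
  have hftc : ∫ s in x..y, f' s = f y - f x :=
    intervalIntegral.integral_eq_sub_of_hasDerivAt (fun s hs => hf s (hab' ▸ hxy hs))
      (hf'.mono_set hxy)
  -- AM-GM with weight `c = b - a`
  have amgm : ∀ s ∈ Icc a b, |f' s| ≤ (4 * c)⁻¹ + c * g s ^ 2 := fun s hs => by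
    have key : (4 * c)⁻¹ + c * g s ^ 2 - g s = (2 * c * g s - 1) ^ 2 / (4 * c) := by
      field_simp; ring
    have : 0 ≤ (2 * c * g s - 1) ^ 2 / (4 * c) := by positivity
    linarith [hfg s hs]
  calc |f y - f x| = |∫ s in x..y, f' s| := by rw [hftc]
    _ ≤ |(∫ s in x..y, |f' s|)| := by
      simpa only [Real.norm_eq_abs] using
        intervalIntegral.norm_integral_le_abs_integral_norm (f := f') (μ := volume)
    _ ≤ |(∫ s in a..b, |f' s|)| :=
      intervalIntegral.abs_integral_mono_interval (uIoc_subset_uIoc_of_uIcc_subset_uIcc hxy)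
        (Eventually.of_forall fun s => abs_nonneg _) hf'.abs
    _ = ∫ s in a..b, |f' s| :=
      abs_of_nonneg (intervalIntegral.integral_nonneg hab.le fun s _ => abs_nonneg _)
    _ ≤ ∫ s in a..b, ((4 * c)⁻¹ + c * g s ^ 2) :=
      intervalIntegral.integral_mono_on hab.le hf'.abs
        (intervalIntegrable_const.add (hg.const_mul c)) amgm
    _ = 1 / 4 + c * ∫ s in a..b, g s ^ 2 := by
      rw [intervalIntegral.integral_add intervalIntegrable_const (hg.const_mul c),
        intervalIntegral.integral_const, intervalIntegral.integral_const_mul, smul_eq_mul]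
      field_simp
      ring

theorem intervalIntegral_le_of_periodic {f : ℝ → ℝ} {T x y : ℝ} (hf : Function.Periodic f T)
    (hf₀ : ∀ s, 0 ≤ f s) (hfi : IntervalIntegrable f volume x (x + T)) (hxy : x ≤ y)
    (hyT : y ≤ x + T) (c : ℝ) :
    ∫ s in x..y, f s ≤ ∫ s in c..c + T, f s :=
  calc ∫ s in x..y, f s ≤ ∫ s in x..x + T, f s :=
        intervalIntegral.integral_mono_interval le_rfl hxy hyT
          (Eventually.of_forall hf₀) hfi
    _ = ∫ s in c..c + T, f s := hf.intervalIntegral_add_eq x c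

theorem integral_inv_one_sub {a r : ℝ} (har : a ≤ r) (hr : r < 1) :
    ∫ t in a..r, (1 - t)⁻¹ = Real.log ((1 - a) / (1 - r)) := by
  rw [intervalIntegral.integral_comp_sub_left (fun t => t⁻¹), integral_inv]
  rw [uIcc_of_le (by linarith)]
  exact fun h => by linarith [h.1]

theorem tendsto_log_div_one_sub {c : ℝ} (hc : 0 < c) :
    Tendsto (fun r => Real.log (c / (1 - r))) (𝓝[<] 1) atTop := by
  have h₀ : Tendsto (fun r : ℝ => 1 - r) (𝓝[<] 1) (𝓝 0) := by
    simpa using ((continuous_sub_left (1 : ℝ)).tendsto 1).mono_left nhdsWithin_le_nhds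
  have h : Tendsto (fun r : ℝ => 1 - r) (𝓝[<] 1) (𝓝[>] 0) :=
    tendsto_nhdsWithin_iff.2
      ⟨h₀, eventually_nhdsWithin_of_forall fun r (hr : r < 1) => sub_pos.2 hr⟩
  simpa only [div_eq_mul_inv, Function.comp_def] using
    tendsto_log_atTop.comp ((tendsto_inv_nhdsGT_zero.comp h).const_mul_atTop hc)

theorem polarCoord_symm_eq_circleMap (p : ℝ × ℝ) :
    Complex.polarCoord.symm p = circleMap 0 p.1 p.2 := by
  rw [Complex.polarCoord_symm_apply, circleMap_zero, Complex.exp_mul_I]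
  push_cast
  ring

theorem setIntegral_ball_zero_eq_intervalIntegral_circleMap {E : Type*} [NormedAddCommGroup E]
    [NormedSpace ℝ E] {f : ℂ → E} (hf : Continuous f) {R : ℝ} (hR : 0 ≤ R) :
    ∫ z in ball (0 : ℂ) R, f z = ∫ s in 0..R, s • ∫ θ in -π..π, f (circleMap 0 s θ) := by
  set S : Set (ℝ × ℝ) := Ioo 0 R ×ˢ Ioo (-π) π
  have hS : S ⊆ polarCoord.target := prod_mono Ioo_subset_Ioi_self subset_rfl
  have hind : EqOn (fun p : ℝ × ℝ => p.1 • (ball 0 R).indicator f (Complex.polarCoord.symm p))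
      (S.indicator fun p => p.1 • f (circleMap 0 p.1 p.2)) polarCoord.target := by
    rintro ⟨s, θ⟩ ⟨hs, hθ⟩
    have hs : 0 < s := hs
    have hball : circleMap 0 s θ ∈ ball 0 R ↔ s < R := by
      rw [mem_ball_zero_iff, norm_circleMap_zero, abs_of_pos hs]
    dsimp only
    rw [polarCoord_symm_eq_circleMap]
    by_cases hsR : s < R
    · rw [indicator_of_mem (hball.2 hsR), indicator_of_mem (show (s, θ) ∈ S from ⟨⟨hs, hsR⟩, hθ⟩)]
    · rw [indicator_of_notMem (mt hball.1 hsR), indicator_of_notMem fun h => hsR h.1.2, smul_zero]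
  have hint : IntegrableOn (fun p : ℝ × ℝ => p.1 • f (circleMap 0 p.1 p.2)) S :=
    ((continuous_fst.smul (hf.comp (by unfold circleMap; fun_prop))).continuousOn
      |>.integrableOn_compact (isCompact_Icc.prod isCompact_Icc)).mono_set
      (prod_mono Ioo_subset_Icc_self Ioo_subset_Icc_self)
  rw [← integral_indicator measurableSet_ball, ← Complex.integral_comp_polarCoord_symm,
    setIntegral_congr_fun polarCoord.open_target.measurableSet hind,
    setIntegral_indicator (measurableSet_Ioo.prod measurableSet_Ioo), inter_eq_right.2 hS,
    Measure.volume_eq_prod, setIntegral_prod _ hint, intervalIntegral.integral_of_le hR,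
    integral_Ioc_eq_integral_Ioo]
  refine setIntegral_congr_fun measurableSet_Ioo fun s _ => ?_
  rw [intervalIntegral.integral_of_le (by linarith [pi_pos]), integral_Ioc_eq_integral_Ioo,
    integral_smul]

theorem abs_sub_comp_le_quarter_add_mul_integral_fderiv_sq {u : ℂ → ℝ} {γ γ' : ℝ → ℂ}
    {a b x y : ℝ} (hu : ContDiff ℝ 1 u) (hγ : ∀ s, HasDerivAt γ (γ' s) s)
    (hγ' : Continuous γ') (hγ'_le : ∀ s ∈ Icc a b, ‖γ' s‖ ≤ 1)
    (hx : x ∈ Icc a b) (hy : y ∈ Icc a b) :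
    |u (γ y) - u (γ x)| ≤ 1 / 4 + (b - a) * ∫ s in a..b, ‖fderiv ℝ u (γ s)‖ ^ 2 := by
  have hγc : Continuous γ := continuous_iff_continuousAt.2 fun s => (hγ s).continuousAt
  have hDu : Continuous fun s => fderiv ℝ u (γ s) := (hu.continuous_fderiv one_ne_zero).comp hγc
  refine abs_sub_le_quarter_add_mul_integral_sq (f' := fun s => fderiv ℝ u (γ s) (γ' s)) hx hy
    (fun s _ => (hu.differentiable one_ne_zero _).hasFDerivAt.comp_hasDerivAt s (hγ s))
    ((hDu.clm_apply hγ').intervalIntegrable _ _) ((hDu.norm.pow 2).intervalIntegrable _ _)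
    fun s hs => ?_
  rw [← Real.norm_eq_abs]
  simpa using (fderiv ℝ u (γ s)).le_opNorm_of_le (hγ'_le s hs)

theorem hasDerivAt_circleMap_radius (c : ℂ) (R θ : ℝ) :
    HasDerivAt (fun R => circleMap c R θ) (circleMap 0 1 θ) R := by
  simpa [circleMap] using ((Complex.ofRealCLM.hasDerivAt (x := R)).mul_const
    (Complex.exp (θ * Complex.I))).const_add c

theorem circleMap_arg_of_mem_sphere {z : ℂ} {t : ℝ} (hz : z ∈ sphere (0 : ℂ) t) :
    circleMap 0 t (Complex.arg z) = z := by
  rw [mem_sphere_zero_iff_norm] at hz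
  rw [circleMap_zero, ← hz, Complex.norm_mul_exp_arg_mul_I]

theorem ContDiff.continuous_norm_fderiv_sq_comp {X : Type*} [TopologicalSpace X] {u : ℂ → ℝ}
    (hu : ContDiff ℝ 1 u) {γ : X → ℂ} (hγ : Continuous γ) :
    Continuous fun x => ‖fderiv ℝ u (γ x)‖ ^ 2 :=
  ((hu.continuous_fderiv one_ne_zero).comp hγ).norm.pow 2

section GradientOnCircles

variable {u : ℂ → ℝ}

def circleGradSq (u : ℂ → ℝ) (s : ℝ) : ℝ :=
  ∫ θ in -π..π, ‖fderiv ℝ u (circleMap 0 s θ)‖ ^ 2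

def radialGradSq (u : ℂ → ℝ) (a θ : ℝ) : ℝ :=
  ∫ s in a..1, ‖fderiv ℝ u (circleMap 0 s θ)‖ ^ 2

theorem continuous_norm_fderiv_circleMap_sq (hu : ContDiff ℝ 1 u) :
    Continuous fun p : ℝ × ℝ => ‖fderiv ℝ u (circleMap 0 p.1 p.2)‖ ^ 2 :=
  hu.continuous_norm_fderiv_sq_comp (by simp only [circleMap]; fun_prop)

theorem continuous_circleGradSq (hu : ContDiff ℝ 1 u) : Continuous (circleGradSq u) :=
  intervalIntegral.continuous_parametric_intervalIntegral_of_continuous'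
    (continuous_norm_fderiv_circleMap_sq hu) _ _

theorem continuous_radialGradSq (hu : ContDiff ℝ 1 u) (a : ℝ) :
    Continuous (radialGradSq u a) := by
  have h : Continuous (Function.uncurry fun θ s => ‖fderiv ℝ u (circleMap 0 s θ)‖ ^ 2) :=
    hu.continuous_norm_fderiv_sq_comp (γ := fun p : ℝ × ℝ => circleMap 0 p.2 p.1)
      (by simp only [circleMap]; fun_prop)
  exact intervalIntegral.continuous_parametric_intervalIntegral_of_continuous' h a 1

theorem circleGradSq_nonneg (u : ℂ → ℝ) (s : ℝ) : 0 ≤ circleGradSq u s :=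
  intervalIntegral.integral_nonneg (by linarith [pi_pos]) fun _ _ => sq_nonneg _

theorem radialGradSq_nonneg (u : ℂ → ℝ) {a : ℝ} (ha : a ≤ 1) (θ : ℝ) : 0 ≤ radialGradSq u a θ :=
  intervalIntegral.integral_nonneg ha fun _ _ => sq_nonneg _

theorem periodic_norm_fderiv_circleMap_sq (u : ℂ → ℝ) (s : ℝ) :
    Function.Periodic (fun θ => ‖fderiv ℝ u (circleMap 0 s θ)‖ ^ 2) (2 * π) := fun θ => by
  simp only [periodic_circleMap 0 s θ]

theorem periodic_radialGradSq (u : ℂ → ℝ) (a : ℝ) :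
    Function.Periodic (radialGradSq u a) (2 * π) := fun θ =>
  intervalIntegral.integral_congr fun s _ => periodic_norm_fderiv_circleMap_sq u s θ

theorem intervalIntegral_radialGradSq_eq (hu : ContDiff ℝ 1 u) (a : ℝ) :
    ∫ θ in -π..π, radialGradSq u a θ = ∫ s in a..1, circleGradSq u s :=
  intervalIntegral_intervalIntegral_swap
    ((hu.continuous_norm_fderiv_sq_comp (γ := fun p : ℝ × ℝ => circleMap 0 p.2 p.1)
      (by simp only [circleMap]; fun_prop)).continuousOn
      |>.integrableOn_compact (isCompact_uIcc.prod isCompact_uIcc) |>.mono_set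
      (prod_mono uIoc_subset_uIcc uIoc_subset_uIcc))

theorem intervalIntegral_circleGradSq_le (hu : ContDiff ℝ 1 u) {a : ℝ} (ha : 1 / 2 ≤ a)
    (ha₁ : a ≤ 1) :
    ∫ s in a..1, circleGradSq u s ≤ 2 * ∫ z in ball (0 : ℂ) 1, ‖fderiv ℝ u z‖ ^ 2 := by
  have hJ := continuous_circleGradSq hu
  calc ∫ s in a..1, circleGradSq u s ≤ ∫ s in a..1, 2 * (s * circleGradSq u s) :=
        intervalIntegral.integral_mono_on ha₁ (hJ.intervalIntegrable _ _)
          ((continuous_const.mul (continuous_id.mul hJ)).intervalIntegrable _ _) fun s hs => by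
            nlinarith [circleGradSq_nonneg u s, hs.1]
    _ = 2 * ∫ s in a..1, s * circleGradSq u s := intervalIntegral.integral_const_mul _ _
    _ ≤ 2 * ∫ s in 0..1, s * circleGradSq u s := by
      gcongr
      exact intervalIntegral.integral_mono_interval (by linarith) ha₁ le_rfl
        (ae_restrict_of_forall_mem measurableSet_Ioc fun s hs =>
          mul_nonneg hs.1.le (circleGradSq_nonneg u s))
        ((continuous_id.mul hJ).intervalIntegrable _ _)
    _ = 2 * ∫ z in ball (0 : ℂ) 1, ‖fderiv ℝ u z‖ ^ 2 := by
      rw [setIntegral_ball_zero_eq_intervalIntegral_circleMap (f := fun z => ‖fderiv ℝ u z‖ ^ 2)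
        ((hu.continuous_fderiv one_ne_zero).norm.pow 2) zero_le_one]
      rfl

theorem apply_circleMap_le_radialGradSq (hu : ContDiff ℝ 1 u) (hsupp : tsupport u ⊆ ball 0 1)
    {a t : ℝ} (hat : a ≤ t) (ht : t ≤ 1) (θ : ℝ) :
    u (circleMap 0 t θ) ≤ 1 / 4 + (1 - t) * radialGradSq u a θ := by
  have hu₁ : u (circleMap 0 1 θ) = 0 := by
    refine image_eq_zero_of_notMem_tsupport fun h => ?_
    have := hsupp h
    rw [mem_ball_zero_iff, norm_circleMap_zero, abs_one] at this
    exact lt_irrefl _ this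
  have hrad := abs_sub_comp_le_quarter_add_mul_integral_fderiv_sq hu
    (hasDerivAt_circleMap_radius 0 · θ) continuous_const (fun _ _ => by simp)
    (left_mem_Icc.2 ht) (right_mem_Icc.2 ht)
  have hmono : ∫ s in t..1, ‖fderiv ℝ u (circleMap 0 s θ)‖ ^ 2 ≤ radialGradSq u a θ :=
    intervalIntegral.integral_mono_interval hat ht le_rfl
      (Eventually.of_forall fun _ => sq_nonneg _)
      ((hu.continuous_norm_fderiv_sq_comp (γ := (circleMap 0 · θ))
        (by simp only [circleMap]; fun_prop)).intervalIntegrable _ _)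
  rw [hu₁, zero_sub, abs_neg] at hrad
  have := mul_le_mul_of_nonneg_left hmono (sub_nonneg.2 ht)
  linarith [le_abs_self (u (circleMap 0 t θ))]

theorem apply_circleMap_le_apply_circleMap_add (hu : ContDiff ℝ 1 u) {t w θ θ₀ : ℝ}
    (ht : |t| ≤ 1) (hθ : θ ∈ Icc (θ₀ - w) (θ₀ + w)) :
    u (circleMap 0 t θ₀) ≤ u (circleMap 0 t θ) + 1 / 4 +
      2 * w * ∫ φ in θ₀ - w..θ₀ + w, ‖fderiv ℝ u (circleMap 0 t φ)‖ ^ 2 := by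
  have hθ₀ : θ₀ ∈ Icc (θ₀ - w) (θ₀ + w) := ⟨by linarith [hθ.1, hθ.2], by linarith [hθ.1, hθ.2]⟩
  have hang := abs_sub_comp_le_quarter_add_mul_integral_fderiv_sq hu (hasDerivAt_circleMap 0 t)
    (by fun_prop) (fun φ _ => by simpa using ht) hθ hθ₀
  rw [show θ₀ + w - (θ₀ - w) = 2 * w by ring] at hang
  linarith [le_abs_self (u (circleMap 0 t θ₀) - u (circleMap 0 t θ))]

theorem inv_one_sub_le_circleGradSq (hu : ContDiff ℝ 1 u)
    (hsupp : tsupport u ⊆ ball 0 1) {κ a t : ℝ} {z : ℂ} (hκ : 0 < κ) (hat : a ≤ t) (ht : t < 1)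
    (hκt : κ * (1 - t) ≤ π) (hW : ∫ θ in -π..π, radialGradSq u a θ ≤ κ / 2)
    (hz : z ∈ sphere (0 : ℂ) t) (huz : 1 ≤ u z) :
    (1 - t)⁻¹ ≤ 8 * κ * circleGradSq u t := by
  have ht₀ : 0 ≤ t := mem_sphere_zero_iff_norm.1 hz ▸ norm_nonneg z
  have h1t : 0 < 1 - t := sub_pos.2 ht
  rw [← circleMap_arg_of_mem_sphere hz] at huz
  set θ₀ := Complex.arg z
  -- `w ≤ π` keeps the arc within one period, and `(1 - t) κ / 2 = w / 2` absorbs the radial terms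
  set w := κ * (1 - t)
  have hw : 0 < w := mul_pos hκ h1t
  have hwindow : θ₀ - w ≤ θ₀ + w ∧ θ₀ + w ≤ θ₀ - w + 2 * π := ⟨by linarith, by linarith⟩
  have hR := continuous_radialGradSq hu a
  set A := ∫ φ in θ₀ - w..θ₀ + w, ‖fderiv ℝ u (circleMap 0 t φ)‖ ^ 2
  have hA : A ≤ circleGradSq u t := by
    have := intervalIntegral_le_of_periodic (periodic_norm_fderiv_circleMap_sq u t)
      (fun _ => sq_nonneg _) ((hu.continuous_norm_fderiv_sq_comp (continuous_circleMap 0 t)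
        ).intervalIntegrable _ _) hwindow.1 hwindow.2 (-π)
    rwa [show -π + 2 * π = π by ring] at this
  have hRw : ∫ θ in θ₀ - w..θ₀ + w, radialGradSq u a θ ≤ κ / 2 := by
    have := intervalIntegral_le_of_periodic (periodic_radialGradSq u a)
      (radialGradSq_nonneg u (by linarith)) (hR.intervalIntegrable _ _) hwindow.1 hwindow.2 (-π)
    rw [show -π + 2 * π = π by ring] at this
    linarith
  have hpoint : ∀ θ ∈ Icc (θ₀ - w) (θ₀ + w), 1 / 2 ≤ (1 - t) * radialGradSq u a θ + 2 * w * A :=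
    fun θ hθ => by
      linarith [apply_circleMap_le_radialGradSq hu hsupp hat ht.le θ,
        apply_circleMap_le_apply_circleMap_add hu (abs_le.2 ⟨by linarith, ht.le⟩) hθ]
  have hint : w ≤ (1 - t) * (κ / 2) + 4 * w ^ 2 * A :=
    calc w = ∫ _ in θ₀ - w..θ₀ + w, (1 / 2 : ℝ) := by simp; ring
      _ ≤ ∫ θ in θ₀ - w..θ₀ + w, ((1 - t) * radialGradSq u a θ + 2 * w * A) :=
        intervalIntegral.integral_mono_on hwindow.1 intervalIntegrable_const
          (((continuous_const.mul hR).add continuous_const).intervalIntegrable _ _) hpoint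
      _ = (1 - t) * (∫ θ in θ₀ - w..θ₀ + w, radialGradSq u a θ) + 4 * w ^ 2 * A := by
        rw [intervalIntegral.integral_add ((hR.intervalIntegrable _ _).const_mul _)
          intervalIntegrable_const, intervalIntegral.integral_const_mul,
          intervalIntegral.integral_const, smul_eq_mul]
        ring
      _ ≤ (1 - t) * (κ / 2) + 4 * w ^ 2 * A := by gcongr
  have h8 : 1 ≤ 8 * w * circleGradSq u t := by nlinarith
  rw [inv_le_iff_one_le_mul₀ h1t]
  linarith

theorem log_le_mul_integral_norm_fderiv_sq (hu : ContDiff ℝ 1 u)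
    (hsupp : tsupport u ⊆ ball 0 1) {κ a r : ℝ} (hκ : 0 < κ) (ha : 1 / 2 ≤ a) (har : a ≤ r)
    (hr : r < 1) (hκa : κ * (1 - a) ≤ π)
    (hE : 4 * ∫ z in ball (0 : ℂ) 1, ‖fderiv ℝ u z‖ ^ 2 ≤ κ)
    (hK : ∀ t ∈ Ioo a r, ∃ z ∈ sphere (0 : ℂ) t, 1 ≤ u z) :
    Real.log ((1 - a) / (1 - r)) ≤ 16 * κ * ∫ z in ball (0 : ℂ) 1, ‖fderiv ℝ u z‖ ^ 2 := by
  have hJ := continuous_circleGradSq hu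
  have hJE := intervalIntegral_circleGradSq_le hu ha (by linarith)
  have hW : ∫ θ in -π..π, radialGradSq u a θ ≤ κ / 2 := by
    rw [intervalIntegral_radialGradSq_eq hu]
    linarith
  have hinv : IntervalIntegrable (fun t : ℝ => (1 - t)⁻¹) volume a r :=
    ContinuousOn.intervalIntegrable <| (continuousOn_const.sub continuousOn_id).inv₀
      fun t ht => (sub_pos.2 ((uIcc_of_le har ▸ ht).2.trans_lt hr)).ne'
  calc Real.log ((1 - a) / (1 - r)) = ∫ t in a..r, (1 - t)⁻¹ := (integral_inv_one_sub har hr).symm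
    _ ≤ ∫ t in a..r, 8 * κ * circleGradSq u t :=
      intervalIntegral.integral_mono_on_of_le_Ioo har hinv
        ((continuous_const.mul hJ).intervalIntegrable _ _) fun t ht => by
          obtain ⟨z, hz, huz⟩ := hK t ht
          exact inv_one_sub_le_circleGradSq hu hsupp hκ ht.1.le (ht.2.trans hr)
            (by nlinarith [ht.1]) hW hz huz
    _ = 8 * κ * ∫ t in a..r, circleGradSq u t := intervalIntegral.integral_const_mul _ _
    _ ≤ 8 * κ * ∫ t in a..1, circleGradSq u t := by
      gcongr
      exact intervalIntegral.integral_mono_interval le_rfl har hr.le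
        (Eventually.of_forall (circleGradSq_nonneg u)) (hJ.intervalIntegrable _ _)
    _ ≤ 8 * κ * (2 * ∫ z in ball (0 : ℂ) 1, ‖fderiv ℝ u z‖ ^ 2) := by gcongr
    _ = 16 * κ * ∫ z in ball (0 : ℂ) 1, ‖fderiv ℝ u z‖ ^ 2 := by ring

end GradientOnCircles

theorem exists_contDiff_one_le_of_subset_closedBall {K : Set ℂ} {c : ℂ} {r R : ℝ} (hr : 0 ≤ r)
    (hrR : r < R) (hK : K ⊆ closedBall c r) :
    ∃ u : ℂ → ℝ, ContDiff ℝ (⊤ : ℕ∞) u ∧ HasCompactSupport u ∧ tsupport u ⊆ ball c R ∧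
      ∀ z ∈ K, 1 ≤ u z := by
  let φ : ContDiffBump c := ⟨(r + R) / 2, (r + 3 * R) / 4, by linarith, by linarith⟩
  refine ⟨φ, φ.contDiff, φ.hasCompactSupport, ?_, fun z hz => ?_⟩
  · rw [φ.tsupport_eq]
    exact closedBall_subset_ball (by simp only [φ]; linarith)
  · rw [φ.one_of_mem_closedBall (closedBall_subset_closedBall (by simp only [φ]; linarith) (hK hz))]

theorem le_conformalCapacity {K U : Set ℂ} {b : ℝ}
    (hne : ∃ u : ℂ → ℝ, ContDiff ℝ (⊤ : ℕ∞) u ∧ HasCompactSupport u ∧ tsupport u ⊆ U ∧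
      ∀ z ∈ K, 1 ≤ u z)
    (hb : ∀ u : ℂ → ℝ, ContDiff ℝ (⊤ : ℕ∞) u → tsupport u ⊆ U → (∀ z ∈ K, 1 ≤ u z) →
      b ≤ ∫ z in U, ‖fderiv ℝ u z‖ ^ 2) :
    b ≤ conformalCapacity K U := by
  obtain ⟨u, hu⟩ := hne
  refine le_csInf ⟨_, u, hu.1, hu.2.1, hu.2.2.1, hu.2.2.2, rfl⟩ ?_
  rintro _ ⟨v, hv, -, hvU, hvK, rfl⟩
  exact hb v hv hvU hvK

theorem capacity_tendsto_atTop_general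
    (K : Set ℂ) (r₀ : ℝ)
    (hr₀ : r₀ ∈ Set.Ico (0 : ℝ) 1)
    (hK : ∀ r ∈ Set.Ioo r₀ 1, (K ∩ Metric.sphere (0 : ℂ) r).Nonempty) :
    Tendsto (fun r : ℝ => conformalCapacity (K ∩ Metric.closedBall 0 r) unitDisk)
      (nhdsWithin 1 (Set.Iio 1)) atTop := by
  refine tendsto_atTop.2 fun b => ?_
  set κ := 4 * max b 1
  have hκ : 0 < κ := by positivity
  set a := max (max r₀ (1 / 2)) (1 - π / κ)
  have ha₁ : a < 1 := max_lt (max_lt hr₀.2 (by norm_num)) (by linarith [div_pos pi_pos hκ])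
  have hκa : κ * (1 - a) ≤ π :=
    (le_div_iff₀' hκ).1 (by linarith [le_max_right (max r₀ (1 / 2)) (1 - π / κ)])
  have ha : 1 / 2 ≤ a := (le_max_right _ _).trans (le_max_left _ _)
  have hr₀a : r₀ ≤ a := (le_max_left _ _).trans (le_max_left _ _)
  filter_upwards [(tendsto_log_div_one_sub (sub_pos.2 ha₁)).eventually_gt_atTop (16 * κ * max b 1),
    Ioo_mem_nhdsLT ha₁] with r hlog har
  refine (le_max_left b 1).trans (le_conformalCapacity
    (exists_contDiff_one_le_of_subset_closedBall (by linarith [har.1]) har.2 inter_subset_right)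
    fun u hu hsupp hKu => ?_)
  by_contra! hE
  change ∫ z in ball (0 : ℂ) 1, ‖fderiv ℝ u z‖ ^ 2 < max b 1 at hE
  have hcircles : ∀ t ∈ Ioo a r, ∃ z ∈ sphere (0 : ℂ) t, 1 ≤ u z := fun t ht => by
    obtain ⟨z, hzK, hz⟩ := hK t ⟨hr₀a.trans_lt ht.1, ht.2.trans har.2⟩
    exact ⟨z, hz, hKu z ⟨hzK, mem_closedBall_zero_iff.2
      ((mem_sphere_zero_iff_norm.1 hz).trans_le ht.2.le)⟩⟩
  have := log_le_mul_integral_norm_fderiv_sq (hu.of_le (by norm_cast)) hsupp hκ ha har.1.le har.2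
    hκa (by linarith) hcircles
  nlinarith

/-- If `K` is closed in `𝔻` and meets the circle `𝕊¹(r)` for every `r ∈ (r₀, 1)`,
then the conformal capacity `cap(K ∩ closure 𝔻(r), 𝔻)` tends to infinity as
`r → 1⁻`. -/
theorem capacity_tendsto_atTop
    (K : Set ℂ) (r₀ : ℝ)
    (hKsub : K ⊆ unitDisk) (hKclosed : ∃ C : Set ℂ, IsClosed C ∧ K = C ∩ unitDisk)
    (hr₀ : r₀ ∈ Set.Ico (0 : ℝ) 1)
    (hK : ∀ r ∈ Set.Ioo r₀ 1, (K ∩ Metric.sphere (0 : ℂ) r).Nonempty) :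
    Tendsto (fun r : ℝ => conformalCapacity (K ∩ Metric.closedBall 0 r) unitDisk)
      (nhdsWithin 1 (Set.Iio 1)) atTop :=
  capacity_tendsto_atTop_general K r₀ hr₀ hK

end
end

section
/- Suppose h ∈ C(𝔻, ℂ) ∩ W^{1,2}(𝔻, ℂ) and h − f ∈ W^{1,2}_0(𝔻, ℂ) for some f ∈ C(closure(𝔻), ℂ). Then for every connected set C ⊂ 𝔻 whose closure meets the unit circle 𝕊¹, the sets f(closure(C) ∩ 𝕊¹) and closure(h(C)) have nonempty intersection. -/
open MeasureTheory Metric Set Filter Topology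

noncomputable section

/-!
Suppose the two sets are disjoint and pick `p ∈ closure C ∩ 𝕊¹`. Then `f p` is at distance
`ε > 0` from `h(C)`, so by continuity of `f` the map `w = h - f` satisfies `|w| > ε/2` on `C`
near `p`. Being connected and accumulating at `p`, `C` crosses every small circle
`|z - p| = s`, hence so does the open set `{|w| > ε/2}`. But `w` is an a.e. limit of smooth maps
`ψ_j` vanishing off `𝔻`, in particular at the point `(1 + s) p` of each such circle; integrating
`Dψ_j` along the circle and applying Cauchy–Schwarz gives `s ∫ |Dψ_j|² dθ ≳ ε² / s` for large `j`.
Integrating in polar coordinates around `p` over `s ∈ (r, δ)` (with Fatou's lemma in `j`) bounds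
the Dirichlet energies of the `ψ_j` from below by `≈ ε² log (δ / r)`, which is unbounded as
`r → 0`, while `w ∈ W^{1,2}_0` keeps them bounded.
-/

open scoped ENNReal Real

theorem lintegral_sq_le_measure_univ_mul {α : Type*} [MeasurableSpace α] (μ : Measure α)
    {f : α → ℝ≥0∞} (hf : AEMeasurable f μ) :
    (∫⁻ x, f x ∂μ) ^ 2 ≤ μ univ * ∫⁻ x, f x ^ 2 ∂μ := by
  have h := ENNReal.lintegral_mul_le_Lp_mul_Lq μ Real.HolderConjugate.two_two hf
    (aemeasurable_const (b := 1))
  simp only [Pi.mul_apply, mul_one, ENNReal.one_rpow, lintegral_const, one_mul] at h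
  calc (∫⁻ x, f x ∂μ) ^ 2
      ≤ ((∫⁻ x, f x ^ (2 : ℝ) ∂μ) ^ (1 / 2 : ℝ) * μ univ ^ (1 / 2 : ℝ)) ^ 2 := by gcongr
    _ = μ univ * ∫⁻ x, f x ^ 2 ∂μ := by
      rw [mul_pow, ← ENNReal.rpow_natCast, ← ENNReal.rpow_natCast, ← ENNReal.rpow_mul,
        ← ENNReal.rpow_mul]
      norm_num [mul_comm]

theorem lintegral_Ioo_ofReal_const_div {c r δ : ℝ} (hc : 0 ≤ c) (hr : 0 < r) (hrδ : r ≤ δ) :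
    ∫⁻ s in Ioo r δ, ENNReal.ofReal (c / s) = ENNReal.ofReal (c * Real.log (δ / r)) := by
  have hcont : ContinuousOn (fun s : ℝ => c / s) (Icc r δ) :=
    continuousOn_const.div continuousOn_id fun s hs => (hr.trans_le hs.1).ne'
  rw [← ofReal_integral_eq_lintegral_ofReal (hcont.integrableOn_Icc.mono_set Ioo_subset_Icc_self)
    ((ae_restrict_mem measurableSet_Ioo).mono fun s hs => div_nonneg hc (hr.trans hs.1).le),
    ← integral_Ioc_eq_integral_Ioo, ← intervalIntegral.integral_of_le hrδ]
  simp_rw [div_eq_mul_inv c]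
  rw [intervalIntegral.integral_const_mul, integral_inv_of_pos hr (hr.trans_le hrδ)]

theorem IsPreconnected.inter_sphere_nonempty {X : Type*} [PseudoMetricSpace X] {C : Set X}
    (hC : IsPreconnected C) {p q : X} (hp : p ∈ closure C) (hq : q ∈ C) {s : ℝ} (hs : 0 < s)
    (hsq : s ≤ dist q p) : (C ∩ sphere p s).Nonempty := by
  obtain ⟨z, hz, hzp⟩ := Metric.mem_closure_iff.mp hp s hs
  have hdist :=
    (hC.image (dist · p) (continuous_id.dist continuous_const).continuousOn).ordConnected
  obtain ⟨y, hy, hys⟩ := hdist.out (mem_image_of_mem _ hz) (mem_image_of_mem _ hq)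
    ⟨(dist_comm p z ▸ hzp).le, hsq⟩
  exact ⟨y, hy, hys⟩

theorem IsPreconnected.exists_forall_sphere_exists_dist_gt {X E : Type*} [MetricSpace X]
    [PseudoMetricSpace E] {C Ω : Set X} {h f : X → E} {p : X} (hC : IsPreconnected C)
    (hCΩ : C ⊆ Ω) (hpC : p ∈ closure C) (hpC' : p ∉ C) (hf : ContinuousWithinAt f Ω p)
    (hfar : f p ∉ closure (h '' C)) :
    ∃ ε > 0, ∃ δ > 0, ∀ s ∈ Ioo 0 δ, ∃ z ∈ C ∩ sphere p s, ε < dist (h z) (f z) := by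
  obtain ⟨q, hq⟩ : C.Nonempty := closure_nonempty_iff.mp ⟨p, hpC⟩
  have hqp : 0 < dist q p := dist_pos.mpr fun hqp => hpC' (hqp ▸ hq)
  obtain ⟨ε, hε, hε_far⟩ : ∃ ε > 0, ∀ z ∈ C, ε ≤ dist (f p) (h z) := by
    simpa [Metric.mem_closure_iff] using hfar
  obtain ⟨δ, hδ, hfδ⟩ := Metric.continuousWithinAt_iff.mp hf (ε / 2) (half_pos hε)
  refine ⟨ε / 2, half_pos hε, min δ (dist q p), lt_min hδ hqp, fun s ⟨hs, hsδ⟩ => ?_⟩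
  obtain ⟨z, hzC, hzs⟩ := hC.inter_sphere_nonempty hpC hq hs (lt_min_iff.mp hsδ).2.le
  have hfz := hfδ (hCΩ hzC) (mem_sphere.mp hzs ▸ (lt_min_iff.mp hsδ).1)
  refine ⟨z, ⟨hzC, hzs⟩, ?_⟩
  linarith [hε_far z hzC, dist_triangle (f p) (f z) (h z), dist_comm (f z) (f p),
    dist_comm (f z) (h z)]

theorem ContinuousLinearMap.opNorm_le_norm_apply_one_add_norm_apply_I {E : Type*}
    [NormedAddCommGroup E] [NormedSpace ℝ E] (A : ℂ →L[ℝ] E) :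
    ‖A‖ ≤ ‖A 1‖ + ‖A Complex.I‖ := by
  refine A.opNorm_le_bound (by positivity) fun v => ?_
  have hv : v = v.re • (1 : ℂ) + v.im • Complex.I := by simp [Complex.real_smul]
  calc ‖A v‖ ≤ |v.re| * ‖A 1‖ + |v.im| * ‖A Complex.I‖ := by
        rw [hv, map_add, map_smul, map_smul]
        exact (norm_add_le _ _).trans (by simp [norm_smul])
    _ ≤ ‖v‖ * ‖A 1‖ + ‖v‖ * ‖A Complex.I‖ := by
        gcongr
        exacts [Complex.abs_re_le_norm v, Complex.abs_im_le_norm v]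
    _ = _ := by ring

theorem continuous_circleMap_prod (p : ℂ) : Continuous fun q : ℝ × ℝ => circleMap p q.1 q.2 := by
  simp only [circleMap]
  fun_prop

theorem norm_circleMap_arg (p : ℂ) {s : ℝ} (hs : 0 ≤ s) :
    ‖circleMap p s (Complex.arg p)‖ = ‖p‖ + s := by
  have hp : circleMap p s (Complex.arg p) = (‖p‖ + s) * Complex.exp (p.arg * Complex.I) := by
    rw [circleMap, add_mul, Complex.norm_mul_exp_arg_mul_I]
  rw [hp, norm_mul, Complex.norm_exp_ofReal_mul_I, mul_one, ← Complex.ofReal_add,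
    Complex.norm_real, Real.norm_of_nonneg (by positivity)]

theorem volume_Ioo_inter_preimage_circleMap_pos {p : ℂ} {s : ℝ} {U : Set ℂ}
    (hU : IsOpen U) (hne : (sphere p s ∩ U).Nonempty) :
    0 < volume (Ioo (-π) π ∩ circleMap p s ⁻¹' U) := by
  obtain ⟨z, hz, hzU⟩ := hne
  have hθ : circleMap p s (Complex.arg (z - p)) = z := by
    rw [circleMap, ← mem_sphere_iff_norm.mp hz, Complex.norm_mul_exp_arg_mul_I, add_sub_cancel]
  have hcl : Complex.arg (z - p) ∈ closure (Ioo (-π) π) := by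
    rw [closure_Ioo (by linarith [Real.pi_pos])]
    exact ⟨(Complex.neg_pi_lt_arg _).le, Complex.arg_le_pi _⟩
  have hpre : circleMap p s ⁻¹' U ∈ 𝓝 (Complex.arg (z - p)) :=
    (hU.preimage (continuous_circleMap p s)).mem_nhds (by rwa [mem_preimage, hθ])
  obtain ⟨θ, hθU, hθI⟩ := mem_closure_iff_nhds.mp hcl _ hpre
  exact (isOpen_Ioo.inter (hU.preimage (continuous_circleMap p s))).measure_pos _ ⟨θ, hθI, hθU⟩

theorem lintegral_ofReal_mul_lintegral_circleMap (p : ℂ) {g : ℂ → ℝ≥0∞} (hg : Measurable g) :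
    ∫⁻ s in Ioi 0, ENNReal.ofReal s * ∫⁻ θ in Ioo (-π) π, g (circleMap p s θ) = ∫⁻ z, g z := by
  have hcircle : ∀ q : ℝ × ℝ, p + Complex.polarCoord.symm q = circleMap p q.1 q.2 := fun q => by
    simp [circleMap, Complex.exp_mul_I]
  have hmeas : Measurable fun q : ℝ × ℝ => g (circleMap p q.1 q.2) :=
    hg.comp (continuous_circleMap_prod p).measurable
  rw [← lintegral_add_left_eq_self g p, ← Complex.lintegral_comp_polarCoord_symm,
    show polarCoord.target = Ioi (0 : ℝ) ×ˢ Ioo (-π) π from rfl, Measure.volume_eq_prod,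
    ← Measure.prod_restrict]
  simp only [smul_eq_mul, hcircle]
  have hprod : Measurable fun q : ℝ × ℝ => ENNReal.ofReal q.1 * g (circleMap p q.1 q.2) :=
    measurable_fst.ennreal_ofReal.mul hmeas
  rw [lintegral_prod _ hprod.aemeasurable]
  exact lintegral_congr fun s => (lintegral_const_mul _ (hmeas.comp measurable_prodMk_left)).symm

theorem ae_ae_circleMap_of_ae {P : ℂ → Prop} (p : ℂ) (hP : ∀ᵐ z, P z) :
    ∀ᵐ s ∂volume.restrict (Ioi 0), ∀ᵐ θ ∂volume.restrict (Ioo (-π) π), P (circleMap p s θ) := by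
  obtain ⟨T, hPT, hT, hT0⟩ := exists_measurable_superset_of_null (ae_iff.mp hP)
  have hind : Measurable (T.indicator (1 : ℂ → ℝ≥0∞)) := measurable_one.indicator hT
  have hzero := lintegral_ofReal_mul_lintegral_circleMap p hind
  rw [lintegral_indicator_one hT, hT0, lintegral_eq_zero_iff' (by fun_prop)] at hzero
  filter_upwards [hzero, ae_restrict_mem measurableSet_Ioi] with s hs (hs0 : 0 < s)
  rw [Pi.zero_apply, mul_eq_zero, ENNReal.ofReal_eq_zero, or_iff_right hs0.not_ge] at hs
  filter_upwards [(lintegral_eq_zero_iff (hind.comp (continuous_circleMap p s).measurable)).mp hs]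
    with θ hθ
  by_contra hnot
  simp [indicator_of_mem (hPT hnot)] at hθ

section Energy

variable {E : Type*} [NormedAddCommGroup E] [NormedSpace ℝ E]

theorem enorm_sub_le_lintegral_fderiv_circleMap {φ : ℂ → E} (hφ : ContDiff ℝ 1 φ) (p : ℂ)
    {s : ℝ} (hs : 0 ≤ s) {θ₀ θ₁ : ℝ} (h₀ : θ₀ ∈ Icc (-π) π) (h₁ : θ₁ ∈ Icc (-π) π) :
    ‖φ (circleMap p s θ₁) - φ (circleMap p s θ₀)‖ₑ ≤
      ENNReal.ofReal s * ∫⁻ θ in Ioo (-π) π, ‖fderiv ℝ φ (circleMap p s θ)‖ₑ := by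
  wlog hle : θ₀ ≤ θ₁ generalizing θ₀ θ₁
  · rw [enorm_sub_rev]
    exact this h₁ h₀ (le_of_not_ge hle)
  have hderiv : ∀ θ, ‖deriv (φ ∘ circleMap p s) θ‖ₑ ≤
      ENNReal.ofReal s * ‖fderiv ℝ φ (circleMap p s θ)‖ₑ := fun θ => by
    rw [fderiv_comp_deriv _ ((hφ.differentiable one_ne_zero) _)
      ((contDiff_circleMap p s).differentiable one_ne_zero _), deriv_circleMap]
    refine ((fderiv ℝ φ _).le_opENorm _).trans_eq ?_
    simp [← ofReal_norm, norm_circleMap_zero, abs_of_nonneg hs, mul_comm]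
  calc ‖φ (circleMap p s θ₁) - φ (circleMap p s θ₀)‖ₑ
      ≤ ∫⁻ θ in Icc θ₀ θ₁, ‖deriv (φ ∘ circleMap p s) θ‖ₑ :=
        enorm_sub_le_lintegral_deriv_of_contDiffOn_Icc
          (hφ.comp (contDiff_circleMap p s)).contDiffOn hle
    _ ≤ ∫⁻ θ in Icc (-π) π, ENNReal.ofReal s * ‖fderiv ℝ φ (circleMap p s θ)‖ₑ :=
        (lintegral_mono_set (Icc_subset_Icc h₀.1 h₁.2)).trans (lintegral_mono hderiv)
    _ = _ := by
      rw [← restrict_Ioo_eq_restrict_Icc, lintegral_const_mul' _ _ ENNReal.ofReal_ne_top]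

theorem ofReal_sq_div_le_lintegral_fderiv_circleMap {φ : ℂ → E} (hφ : ContDiff ℝ 1 φ) (p : ℂ)
    {s : ℝ} (hs : 0 < s) {θ₀ θ₁ : ℝ} (h₀ : θ₀ ∈ Icc (-π) π) (h₁ : θ₁ ∈ Icc (-π) π) :
    ENNReal.ofReal (‖φ (circleMap p s θ₁) - φ (circleMap p s θ₀)‖ ^ 2 / (2 * π * s)) ≤
      ENNReal.ofReal s * ∫⁻ θ in Ioo (-π) π, ‖fderiv ℝ φ (circleMap p s θ)‖ₑ ^ 2 := by
  have hmeas : Measurable fun θ => ‖fderiv ℝ φ (circleMap p s θ)‖ₑ :=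
    ((hφ.continuous_fderiv one_ne_zero).comp (continuous_circleMap p s)).enorm.measurable
  rw [ENNReal.ofReal_div_of_pos (by positivity), ENNReal.ofReal_pow (norm_nonneg _), ofReal_norm]
  refine ENNReal.div_le_of_le_mul ?_
  calc ‖φ (circleMap p s θ₁) - φ (circleMap p s θ₀)‖ₑ ^ 2
      ≤ (ENNReal.ofReal s * ∫⁻ θ in Ioo (-π) π, ‖fderiv ℝ φ (circleMap p s θ)‖ₑ) ^ 2 := by
        gcongr
        exact enorm_sub_le_lintegral_fderiv_circleMap hφ p hs.le h₀ h₁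
    _ ≤ ENNReal.ofReal s ^ 2 * (ENNReal.ofReal (2 * π) *
          ∫⁻ θ in Ioo (-π) π, ‖fderiv ℝ φ (circleMap p s θ)‖ₑ ^ 2) := by
        rw [mul_pow]
        gcongr
        refine (lintegral_sq_le_measure_univ_mul _ hmeas.aemeasurable).trans_eq ?_
        rw [Measure.restrict_apply_univ, Real.volume_Ioo, sub_neg_eq_add, ← two_mul]
    _ = _ := by
        rw [ENNReal.ofReal_mul (p := 2 * π) (by positivity), sq]
        ring

theorem ofReal_div_le_liminf_lintegral_fderiv_circleMap {ψ : ℕ → ℂ → E}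
    (hψ : ∀ j, ContDiff ℝ 1 (ψ j)) (hψ_supp : ∀ j, tsupport (ψ j) ⊆ ball 0 1) {p : ℂ}
    (hp : ‖p‖ = 1) {s : ℝ} (hs : 0 < s) {θ : ℝ} (hθ : θ ∈ Icc (-π) π) {y : E}
    (hconv : Tendsto (fun j => ψ j (circleMap p s θ)) atTop (𝓝 y)) {η : ℝ} (hη : 0 ≤ η)
    (hy : η < ‖y‖) :
    ENNReal.ofReal (η ^ 2 / (2 * π) / s) ≤ liminf (fun j => ENNReal.ofReal s *
      ∫⁻ θ in Ioo (-π) π, ‖fderiv ℝ (ψ j) (circleMap p s θ)‖ₑ ^ 2) atTop := by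
  have harg : Complex.arg p ∈ Icc (-π) π := ⟨(Complex.neg_pi_lt_arg p).le, Complex.arg_le_pi p⟩
  have hzero : ∀ j, ψ j (circleMap p s (Complex.arg p)) = 0 := fun j =>
    image_eq_zero_of_notMem_tsupport fun hmem => by
      have := mem_ball_zero_iff.mp (hψ_supp j hmem)
      rw [norm_circleMap_arg p hs.le, hp] at this
      linarith
  refine le_liminf_of_le (by isBoundedDefault) ?_
  filter_upwards [hconv.norm.eventually (eventually_gt_nhds hy)] with j hj
  refine le_trans ?_ (ofReal_sq_div_le_lintegral_fderiv_circleMap (hψ j) p hs harg hθ)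
  rw [hzero, sub_zero, div_div]
  gcongr

theorem liminf_lintegral_enorm_fderiv_sq_eq_top {ψ : ℕ → ℂ → E} {w : ℂ → E} {U : Set ℂ}
    {p : ℂ} {δ η : ℝ} (hψ : ∀ j, ContDiff ℝ 1 (ψ j)) (hψ_supp : ∀ j, tsupport (ψ j) ⊆ ball 0 1)
    (hp : ‖p‖ = 1) (hU : IsOpen U) (hconv : ∀ᵐ z, z ∈ U → Tendsto (ψ · z) atTop (𝓝 (w z)))
    (hη : 0 < η) (hUw : ∀ z ∈ U, η < ‖w z‖) (hδ : 0 < δ)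
    (hmeet : ∀ s ∈ Ioo 0 δ, (sphere p s ∩ U).Nonempty) :
    liminf (fun j => ∫⁻ z, ‖fderiv ℝ (ψ j) z‖ₑ ^ 2) atTop = ⊤ := by
  set c := η ^ 2 / (2 * π)
  set F : ℕ → ℝ → ℝ≥0∞ := fun j s => ENNReal.ofReal s *
    ∫⁻ θ in Ioo (-π) π, ‖fderiv ℝ (ψ j) (circleMap p s θ)‖ₑ ^ 2
  have hF : ∀ j, Measurable (F j) := fun j => by
    have := ((hψ j).continuous_fderiv one_ne_zero).comp (continuous_circleMap_prod p)
    exact measurable_id.ennreal_ofReal.mul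
      (this.enorm.measurable.pow_const 2).lintegral_prod_right'
  have hlower : ∀ᵐ s ∂volume.restrict (Ioo 0 δ), ENNReal.ofReal (c / s) ≤ liminf (F · s) atTop := by
    filter_upwards [ae_restrict_of_ae_restrict_of_subset Ioo_subset_Ioi_self
      (ae_ae_circleMap_of_ae p hconv), ae_restrict_mem measurableSet_Ioo] with s hs hsδ
    set T := Ioo (-π) π ∩ circleMap p s ⁻¹' U
    have : (ae (volume.restrict T)).NeBot :=
      ae_restrict_neBot.mpr (volume_Ioo_inter_preimage_circleMap_pos hU (hmeet s hsδ)).ne'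
    have hT : MeasurableSet T :=
      measurableSet_Ioo.inter (hU.measurableSet.preimage (continuous_circleMap p s).measurable)
    obtain ⟨θ, hθconv, hθ, hθU⟩ :=
      ((ae_restrict_of_ae_restrict_of_subset inter_subset_left hs).and (ae_restrict_mem hT)).exists
    exact ofReal_div_le_liminf_lintegral_fderiv_circleMap hψ hψ_supp hp hsδ.1
      (Ioo_subset_Icc_self hθ) (hθconv hθU) hη.le (hUw _ hθU)
  refine ENNReal.eq_top_of_forall_nnreal_le fun M => ?_
  -- the inner radius at which the logarithmic lower bound `c log (δ / r)` reaches `M`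
  set r := δ * Real.exp (-(M / c))
  have hr : 0 < r := by positivity
  have hrδ : r ≤ δ :=
    mul_le_of_le_one_right hδ.le (Real.exp_le_one_iff.mpr (neg_nonpos.mpr (by positivity)))
  have hlog : c * Real.log (δ / r) = M := by
    rw [div_mul_cancel_left₀ hδ.ne', Real.log_inv, Real.log_exp, neg_neg,
      mul_div_cancel₀ _ (by positivity)]
  calc (M : ℝ≥0∞) = ∫⁻ s in Ioo r δ, ENNReal.ofReal (c / s) := by
        rw [lintegral_Ioo_ofReal_const_div (by positivity) hr hrδ, hlog, ENNReal.ofReal_coe_nnreal]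
    _ ≤ ∫⁻ s in Ioo r δ, liminf (F · s) atTop :=
        lintegral_mono_ae (ae_restrict_of_ae_restrict_of_subset (Ioo_subset_Ioo_left hr.le) hlower)
    _ ≤ liminf (fun j => ∫⁻ s in Ioo r δ, F j s) atTop := lintegral_liminf_le hF
    _ ≤ liminf (fun j => ∫⁻ z, ‖fderiv ℝ (ψ j) z‖ₑ ^ 2) atTop := by
        refine liminf_le_liminf (Eventually.of_forall fun j => ?_)
        rw [← lintegral_ofReal_mul_lintegral_circleMap p
          (((hψ j).continuous_fderiv one_ne_zero).enorm.measurable.pow_const 2)]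
        exact lintegral_mono_set (Ioo_subset_Ioi_self.trans (Ioi_subset_Ioi hr.le))

theorem eLpNorm_fderiv_le_add {φ : ℂ → E} (hφ : ContDiff ℝ 1 φ) (μ : Measure ℂ)
    {q : ℝ≥0∞} (hq : 1 ≤ q) :
    eLpNorm (fderiv ℝ φ) q μ ≤
      eLpNorm (fun z => fderiv ℝ φ z 1) q μ + eLpNorm (fun z => fderiv ℝ φ z Complex.I) q μ := by
  have hcont := hφ.continuous_fderiv one_ne_zero
  set u : ℂ → E := fun z => fderiv ℝ φ z 1
  set v : ℂ → E := fun z => fderiv ℝ φ z Complex.I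
  calc eLpNorm (fderiv ℝ φ) q μ ≤ eLpNorm (fun z => ‖u z‖ + ‖v z‖) q μ :=
        eLpNorm_mono_real fun z => (fderiv ℝ φ z).opNorm_le_norm_apply_one_add_norm_apply_I
    _ ≤ eLpNorm (fun z => ‖u z‖) q μ + eLpNorm (fun z => ‖v z‖) q μ :=
        eLpNorm_add_le (hcont.clm_apply continuous_const).aestronglyMeasurable.norm
          (hcont.clm_apply continuous_const).aestronglyMeasurable.norm hq
    _ = eLpNorm u q μ + eLpNorm v q μ := by rw [eLpNorm_norm, eLpNorm_norm]

theorem lintegral_enorm_fderiv_sq_eq_eLpNorm_sq {φ : ℂ → E} {Ω : Set ℂ} (hφ : tsupport φ ⊆ Ω) :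
    ∫⁻ z, ‖fderiv ℝ φ z‖ₑ ^ 2 = eLpNorm (fderiv ℝ φ) 2 (volume.restrict Ω) ^ 2 := by
  have := eLpNorm_nnreal_pow_eq_lintegral (f := fderiv ℝ φ) (μ := volume.restrict Ω)
    (p := 2) two_ne_zero
  simp only [NNReal.coe_ofNat, ENNReal.rpow_ofNat, ENNReal.coe_ofNat] at this
  rw [this, setLIntegral_eq_of_support_subset]
  refine (Function.support_subset_iff'.mpr fun z hz => ?_).trans hφ
  rw [fderiv_of_notMem_tsupport ℝ hz]
  exact (pow_eq_zero_iff two_ne_zero).mpr (enorm_zero (E := ℂ →L[ℝ] E))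

end Energy

theorem MemW120.exists_smooth_ae_approx {Ω : Set ℂ} {w : ℂ → ℂ} (hw : MemW120 Ω w) :
    ∃ ψ : ℕ → ℂ → ℂ, (∀ j, ContDiff ℝ (⊤ : ℕ∞) (ψ j) ∧ tsupport (ψ j) ⊆ Ω) ∧
      (∀ᵐ z ∂volume.restrict Ω, Tendsto (ψ · z) atTop (𝓝 (w z))) ∧
      liminf (fun j => ∫⁻ z, ‖fderiv ℝ (ψ j) z‖ₑ ^ 2) atTop < ⊤ := by
  obtain ⟨gx, gy, -, -, hw, hgx, hgy, φ, hφ, hφw, hφx, hφy⟩ := hw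
  set μ := volume.restrict Ω
  have hφw' : Tendsto (fun n => eLpNorm (φ n - w) 2 μ) atTop (𝓝 0) := by
    refine hφw.congr fun n => ?_
    rw [eLpNorm_sub_comm]
    rfl
  obtain ⟨ns, hns, hconv⟩ := (tendstoInMeasure_of_tendsto_eLpNorm two_ne_zero
    (fun n => (hφ n).1.continuous.aestronglyMeasurable) hw.1 hφw').exists_seq_tendsto_ae
  refine ⟨fun j => φ (ns j), fun j => ⟨(hφ _).1, (hφ _).2.2⟩, hconv, ?_⟩
  have hbound : ∀ (g : ℂ → ℂ) (d : ℕ → ℂ → ℂ), MemLp g 2 μ → (∀ n, Continuous (d n)) →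
      Tendsto (fun n => eLpNorm (fun z => g z - d n z) 2 μ) atTop (𝓝 0) →
      ∀ᶠ j in atTop, eLpNorm (d (ns j)) 2 μ ≤ eLpNorm g 2 μ + 1 := by
    intro g d hg hd hgd
    filter_upwards [(hgd.comp hns.tendsto_atTop).eventually (eventually_le_nhds zero_lt_one)]
      with j hj
    calc eLpNorm (d (ns j)) 2 μ = eLpNorm (g - (g - d (ns j))) 2 μ := by rw [sub_sub_cancel]
      _ ≤ eLpNorm g 2 μ + eLpNorm (g - d (ns j)) 2 μ :=
        eLpNorm_sub_le hg.1 (hg.1.sub (hd _).aestronglyMeasurable) one_le_two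
      _ ≤ eLpNorm g 2 μ + 1 := by gcongr; exact hj
  have hdcont : ∀ v n, Continuous fun z => fderiv ℝ (φ n) z v := fun v n =>
    ((hφ n).1.continuous_fderiv (by simp)).clm_apply continuous_const
  have henergy : ∀ᶠ j in atTop, ∫⁻ z, ‖fderiv ℝ (φ (ns j)) z‖ₑ ^ 2 ≤
      (eLpNorm gx 2 μ + 1 + (eLpNorm gy 2 μ + 1)) ^ 2 := by
    filter_upwards [hbound gx _ hgx (hdcont 1) hφx, hbound gy _ hgy (hdcont Complex.I) hφy]
      with j hx hy
    rw [lintegral_enorm_fderiv_sq_eq_eLpNorm_sq (hφ _).2.2]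
    gcongr
    exact (eLpNorm_fderiv_le_add ((hφ _).1.of_le (by exact_mod_cast le_top)) μ one_le_two).trans
      (add_le_add hx hy)
  refine (liminf_le_of_frequently_le' henergy.frequently).trans_lt ?_
  have := hgx.eLpNorm_ne_top
  have := hgy.eLpNorm_ne_top
  finiteness

theorem sobolev_boundary_topology_general
    (h f : ℂ → ℂ)
    (hC : ContinuousOn h unitDisk)
    (hfC : ContinuousOn f (closure unitDisk))
    (hW0 : MemW120 unitDisk (fun z => h z - f z))
    (C : Set ℂ) (hCsub : C ⊆ unitDisk) (hCconn : IsPreconnected C)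
    (hCbd : (closure C ∩ unitCircle).Nonempty) :
    (f '' (closure C ∩ unitCircle) ∩ closure (h '' C)).Nonempty := by
  by_contra hdisj
  obtain ⟨p, hpC, hp⟩ := hCbd
  have hp1 : ‖p‖ = 1 := mem_sphere_zero_iff_norm.mp hp
  have hpC' : p ∉ C := fun hp' => (mem_ball_zero_iff.mp (hCsub hp')).ne hp1
  have hfp : ContinuousWithinAt f unitDisk p :=
    (hfC p (sphere_subset_closedBall.trans (closure_ball 0 one_ne_zero).symm.subset hp)).mono
      subset_closure
  obtain ⟨ε, hε, δ, hδ, hmeet⟩ := hCconn.exists_forall_sphere_exists_dist_gt hCsub hpC hpC' hfp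
    fun hmem => hdisj ⟨f p, ⟨p, ⟨hpC, hp⟩, rfl⟩, hmem⟩
  set U := unitDisk ∩ {z | ε < ‖h z - f z‖}
  have hU : IsOpen U :=
    (hC.sub (hfC.mono subset_closure)).norm.isOpen_inter_preimage isOpen_ball isOpen_Ioi
  obtain ⟨ψ, hψ, hconv, henergy⟩ := hW0.exists_smooth_ae_approx
  refine henergy.ne (liminf_lintegral_enorm_fderiv_sq_eq_top
    (fun j => (hψ j).1.of_le (by exact_mod_cast le_top)) (fun j => (hψ j).2) hp1 hU ?_ hε
    (fun z hz => hz.2) hδ fun s hs => ?_)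
  · filter_upwards [(ae_restrict_iff' measurableSet_ball).mp hconv] with z hz hzU using hz hzU.1
  · obtain ⟨z, ⟨hzC, hzs⟩, hz⟩ := hmeet s hs
    exact ⟨z, hzs, hCsub hzC, show ε < ‖h z - f z‖ by rwa [← dist_eq_norm]⟩

/-- If `h ∈ C(𝔻, ℂ) ∩ W^{1,2}(𝔻, ℂ)` and `h - f ∈ W^{1,2}_0(𝔻, ℂ)` for a continuous
`f : closure 𝔻 → ℂ`, then for every connected `C ⊆ 𝔻` whose closure meets `𝕊¹`, the
sets `f(closure C ∩ 𝕊¹)` and `closure (h(C))` intersect. -/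
theorem sobolev_boundary_topology
    (h f : ℂ → ℂ)
    (hC : ContinuousOn h unitDisk) (hW : MemW12 unitDisk h)
    (hfC : ContinuousOn f (closure unitDisk))
    (hW0 : MemW120 unitDisk (fun z => h z - f z))
    (C : Set ℂ) (hCsub : C ⊆ unitDisk) (hCconn : IsPreconnected C)
    (hCbd : (closure C ∩ unitCircle).Nonempty) :
    (f '' (closure C ∩ unitCircle) ∩ closure (h '' C)).Nonempty :=
  sobolev_boundary_topology_general h f hC hfC hW0 C hCsub hCconn hCbd

end
end

section
/- Let f : 𝔻 → ℂ be a continuous map on the open unit disk, let y ∈ ℂ, and let K be a connected component of f⁻¹{y} with closure(K) ⊂ 𝔻. Then there exists r_K > 0 such that for every r ∈ (0, r_K), the connected component U_r of f⁻¹(B²(y, r)) containing K satisfies closure(U_r) ⊂ 𝔻. -/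
/-!
Choose `ρ < 1` with `closure K ⊆ B(0, ρ)` and let `C = f⁻¹{y} ∩ B̄(0, ρ)`, a compact set in
which the component of `x` lies inside `K`. In a compact Hausdorff space components are
intersections of clopen sets, so `C` splits into two disjoint compact pieces, one containing `x`
and lying in `B(0, ρ)`. An open `W` with compact closure in `B(0, ρ)` separating the two pieces has
`f ≠ y` on its compact frontier, hence `|f - y| ≥ r_K > 0` there. For `r < r_K` the connected set
`U_r` meets `W` but not its frontier, so `U_r ⊆ W`.
-/

open MeasureTheory Metric Set Filter Topology

noncomputable section

section Separation

variable {X : Type*} [TopologicalSpace X]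

theorem IsPreconnected.subset_of_disjoint_frontier {s u : Set X} (hs : IsPreconnected s)
    (hu : IsOpen u) (hsu : (s ∩ u).Nonempty) (hfr : Disjoint s (frontier u)) : s ⊆ u :=
  hs.subset_of_closure_inter_subset hu hsu fun _ ⟨hzu, hzs⟩ ↦
    by_contra fun hz ↦ hfr.notMem_of_mem_left hzs (hu.frontier_eq ▸ ⟨hzu, hz⟩)

/-- Passing to the totally disconnected quotient `ConnectedComponents X` turns this into the
clopen basis of a profinite space. -/
theorem exists_isClopen_of_connectedComponent_subset [T2Space X] [CompactSpace X] {x : X}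
    {U : Set X} (hU : IsOpen U) (hxU : connectedComponent x ⊆ U) :
    ∃ V, IsClopen V ∧ x ∈ V ∧ V ⊆ U := by
  have hx : ConnectedComponents.mk x ∉ ConnectedComponents.mk '' Uᶜ := by
    rintro ⟨z, hzU, hzx⟩
    exact hzU (hxU (ConnectedComponents.coe_eq_coe'.1 hzx))
  obtain ⟨V, hV, hxV, hVU⟩ := compact_exists_isClopen_in_isOpen
    (hU.isClosed_compl.isCompact.image ConnectedComponents.continuous_coe).isClosed.isOpen_compl hx
  exact ⟨ConnectedComponents.mk ⁻¹' V, hV.preimage ConnectedComponents.continuous_coe, hxV,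
    fun z hzV ↦ by_contra fun hzU ↦ hVU hzV ⟨z, hzU, rfl⟩⟩

theorem IsCompact.exists_isOpen_disjoint_frontier_of_connectedComponentIn_subset [T2Space X]
    [LocallyCompactSpace X] {C U : Set X} {x : X} (hC : IsCompact C) (hx : x ∈ C)
    (hU : IsOpen U) (hCU : connectedComponentIn C x ⊆ U) :
    ∃ W, IsOpen W ∧ x ∈ W ∧ IsCompact (closure W) ∧ closure W ⊆ U ∧ Disjoint (frontier W) C := by
  have : CompactSpace C := isCompact_iff_compactSpace.1 hC
  rw [connectedComponentIn_eq_image hx, image_subset_iff] at hCU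
  obtain ⟨V, hV, hxV, hVU⟩ :=
    exists_isClopen_of_connectedComponent_subset (hU.preimage continuous_subtype_val) hCU
  have hB : IsClosed (((↑) : C → X) '' Vᶜ) :=
    (hV.compl.isClosed.isCompact.image continuous_subtype_val).isClosed
  have hAB : ((↑) : C → X) '' V ⊆ U ∩ (((↑) : C → X) '' Vᶜ)ᶜ := by
    rintro _ ⟨z, hzV, rfl⟩
    exact ⟨hVU hzV, by simpa using hzV⟩
  obtain ⟨L, hL, hVL, hLU⟩ := exists_compact_between
    (hV.isClosed.isCompact.image continuous_subtype_val) (hU.inter hB.isOpen_compl) hAB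
  have hWL : closure (interior L) ⊆ L := closure_minimal interior_subset hL.isClosed
  refine ⟨interior L, isOpen_interior, hVL ⟨_, hxV, rfl⟩,
    hL.of_isClosed_subset isClosed_closure hWL, hWL.trans (hLU.trans inter_subset_left),
    disjoint_left.2 fun z hz hzC ↦ ?_⟩
  rw [isOpen_interior.frontier_eq] at hz
  by_cases hzV : (⟨z, hzC⟩ : C) ∈ V
  · exact hz.2 (hVL ⟨_, hzV, rfl⟩)
  · exact (hLU (hWL hz.1)).2 ⟨_, hzV, rfl⟩

end Separation

theorem IsCompact.exists_pos_forall_le_dist {X Y : Type*} [TopologicalSpace X] [MetricSpace Y]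
    {f : X → Y} {T : Set X} {y : Y} (hT : IsCompact T) (hf : ContinuousOn f T)
    (hy : ∀ z ∈ T, f z ≠ y) : ∃ ε > 0, ∀ z ∈ T, ε ≤ dist (f z) y := by
  have hy' : y ∉ f '' T := fun ⟨z, hz, hfz⟩ ↦ hy z hz hfz
  obtain ⟨ε, hε, hεT⟩ :=
    Metric.mem_nhds_iff.1 ((hT.image_of_continuousOn hf).isClosed.isOpen_compl.mem_nhds hy')
  exact ⟨ε, hε, fun z hz ↦ not_lt.1 fun hlt ↦ hεT (mem_ball.2 hlt) ⟨z, hz, rfl⟩⟩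

/-- If `K` is a connected component of `f⁻¹{y}` with `closure K ⊆ 𝔻`, then for all
sufficiently small `r > 0`, the component of `f⁻¹(B²(y,r))` containing `K` also has
closure contained in `𝔻`. -/
theorem small_radius_component_in_disk
    (f : ℂ → ℂ) (hf : ContinuousOn f unitDisk) (y : ℂ)
    (x : ℂ) (hx : x ∈ unitDisk ∩ f ⁻¹' {y})
    (hK : closure (connectedComponentIn (unitDisk ∩ f ⁻¹' {y}) x) ⊆ unitDisk) :
    ∃ rK > 0, ∀ r ∈ Set.Ioo (0 : ℝ) rK,
      closure (connectedComponentIn (unitDisk ∩ f ⁻¹' Metric.ball y r) x) ⊆ unitDisk := by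
  obtain ⟨ρ, hρ, hKρ⟩ := exists_lt_subset_ball isClosed_closure hK
  have hρD : closedBall (0 : ℂ) ρ ⊆ unitDisk := closedBall_subset_ball hρ
  set C := closedBall (0 : ℂ) ρ ∩ f ⁻¹' {y}
  have hC : IsCompact C := (isCompact_closedBall 0 ρ).of_isClosed_subset
    ((hf.mono hρD).preimage_isClosed_of_isClosed isClosed_closedBall isClosed_singleton)
    inter_subset_left
  have hxC : x ∈ C :=
    ⟨ball_subset_closedBall (hKρ (subset_closure (mem_connectedComponentIn hx))), hx.2⟩
  have hCK : C ⊆ unitDisk ∩ f ⁻¹' {y} := fun z hz ↦ ⟨hρD hz.1, hz.2⟩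
  have hCρ : connectedComponentIn C x ⊆ ball 0 ρ :=
    (connectedComponentIn_mono x hCK).trans (subset_closure.trans hKρ)
  obtain ⟨W, hWo, hxW, hWc, hWρ, hWC⟩ :=
    hC.exists_isOpen_disjoint_frontier_of_connectedComponentIn_subset hxC isOpen_ball hCρ
  have hfrρ : frontier W ⊆ closedBall 0 ρ :=
    frontier_subset_closure.trans (hWρ.trans ball_subset_closedBall)
  have hfry : ∀ z ∈ frontier W, f z ≠ y := fun z hz hfz ↦
    hWC.notMem_of_mem_left hz ⟨hfrρ hz, hfz⟩
  obtain ⟨rK, hrK, hfr⟩ := (hWc.of_isClosed_subset isClosed_frontier frontier_subset_closure)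
    |>.exists_pos_forall_le_dist (hf.mono (hfrρ.trans hρD)) hfry
  refine ⟨rK, hrK, fun r hr ↦ ?_⟩
  have hxr : x ∈ unitDisk ∩ f ⁻¹' ball y r := ⟨hx.1, mem_preimage.2 (hx.2 ▸ mem_ball_self hr.1)⟩
  have hUW : connectedComponentIn (unitDisk ∩ f ⁻¹' ball y r) x ⊆ W :=
    isPreconnected_connectedComponentIn.subset_of_disjoint_frontier hWo
      ⟨x, mem_connectedComponentIn hxr, hxW⟩
      (disjoint_left.2 fun z hz hzW ↦ (hfr z hzW).not_gt
        ((mem_ball.1 (connectedComponentIn_subset _ _ hz).2).trans hr.2))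
  exact (closure_mono hUW).trans (hWρ.trans (ball_subset_ball hρ.le))
end
end
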